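/- Let G be an m-regular graph on 2n vertices with 3 ≤ n−1 ≤ m < 2n. Then the domination polynomial of G is unimodal with a mode at n. -/

import Mathlib

/-- A finite set of vertices dominates the graph. -/
def Dominates {V : Type*} (G : SimpleGraph V) (U : Finset V) : Prop :=
  ∀ v : V, v ∈ U ∨ ∃ u ∈ U, G.Adj u v

/-- The number of dominating sets of size `i`. -/
noncomputable def domCount {V : Type*} [Fintype V] (G : SimpleGraph V) (i : ℕ) : ℕ :=
  Nat.card {U : Finset V // U.card = i ∧ Dominates G U}

/-- The coefficient sequence is non-decreasing up to `k` and non-increasing afterwards,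
so in particular `k` is a mode. -/
def UnimodalWithMode (d : ℕ → ℕ) (k : ℕ) : Prop :=
  (∀ i < k, d i ≤ d (i + 1)) ∧ (∀ i, k ≤ i → d (i + 1) ≤ d i)

/-!
Dominating sets form an up-closed family, and for any up-closed family of subsets of an
`N`-set, double counting the pairs `A ⊂ B` with `#A = i`, `#B = i + 1` shows that the number of
members of size `i` does not decrease while `2 i < N`. A set misses the closed neighbourhood of
some vertex as soon as it fails to dominate, so in an `m`-regular graph on `2n` vertices with
`m ≥ n - 1` every set of more than `n` vertices dominates and at most `2n` sets of exactly `n`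
vertices fail to (complements of closed neighbourhoods). Above `n` the coefficients are thus the
binomial coefficients `C(2n, i)`, and the step from `n` to `n + 1` costs at least
`C(2n, n) - C(2n, n + 1) = C(2n, n) / (n + 1) ≥ 2n`, which holds once `n ≥ 4`.
-/

open Finset

namespace Nat

theorem choose_succ_le_choose {N i : ℕ} (h : N ≤ 2 * i + 1) : N.choose (i + 1) ≤ N.choose i := by
  refine Nat.le_of_mul_le_mul_right ?_ i.succ_pos
  calc N.choose (i + 1) * (i + 1) = N.choose i * (N - i) := choose_succ_right_eq N i
    _ ≤ N.choose i * (i + 1) := Nat.mul_le_mul_left _ (by omega)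

theorem two_mul_mul_succ_le_centralBinom {n : ℕ} (hn : 4 ≤ n) :
    2 * n * (n + 1) ≤ centralBinom n := by
  induction n, hn using Nat.le_induction with
  | base => decide
  | succ n hn ih =>
    have := succ_mul_centralBinom_succ n
    nlinarith

theorem choose_two_mul_succ_add_le {n : ℕ} (hn : 4 ≤ n) :
    (2 * n).choose (n + 1) + 2 * n ≤ (2 * n).choose n := by
  have hsucc : (2 * n).choose (n + 1) * (n + 1) = (2 * n).choose n * n := by
    rw [choose_succ_right_eq]; congr 1; omega
  have hcentral := two_mul_mul_succ_le_centralBinom hn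
  rw [centralBinom_eq_two_mul_choose] at hcentral
  nlinarith

end Nat

namespace Finset

variable {α : Type*} [Fintype α] [DecidableEq α]

theorem card_filter_powersetCard_le_succ {p : Finset α → Prop} [DecidablePred p]
    (hp : Monotone p) {i : ℕ} (hi : 2 * i + 1 ≤ Fintype.card α) :
    #{A ∈ powersetCard i (univ : Finset α) | p A} ≤ #{B ∈ powersetCard (i + 1) univ | p B} := by
  set s := {A ∈ powersetCard i (univ : Finset α) | p A}
  set t := {B ∈ powersetCard (i + 1) (univ : Finset α) | p B}
  have hup : ∀ A ∈ s, Fintype.card α - i ≤ #(t.bipartiteAbove (· ⊆ ·) A) := by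
    intro A hA
    simp only [s, mem_filter, mem_powersetCard] at hA
    obtain ⟨⟨-, hAcard⟩, hpA⟩ := hA
    rw [← hAcard, ← card_compl]
    refine card_le_card_of_injOn (insert · A) (fun x hx => ?_)
      (fun x hx y _ hxy => (insert_inj (mem_compl.mp hx)).mp hxy)
    have hx : x ∉ A := mem_compl.mp hx
    simp only [mem_coe, mem_bipartiteAbove, t, mem_filter, mem_powersetCard]
    exact ⟨⟨⟨subset_univ _, by rw [card_insert_of_notMem hx, hAcard]⟩,
      hp (subset_insert x A) hpA⟩, subset_insert x A⟩
  have hdown : ∀ B ∈ t, #(s.bipartiteBelow (· ⊆ ·) B) ≤ i + 1 := by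
    intro B hB
    simp only [t, mem_filter, mem_powersetCard] at hB
    calc #(s.bipartiteBelow (· ⊆ ·) B) ≤ #(B.powersetCard i) := by
          refine card_le_card fun A hA => ?_
          simp only [mem_bipartiteBelow, s, mem_filter, mem_powersetCard] at hA
          exact mem_powersetCard.mpr ⟨hA.2, hA.1.1.2⟩
      _ = i + 1 := by rw [card_powersetCard, hB.1.2, Nat.choose_succ_self_right]
  refine Nat.le_of_mul_le_mul_right ?_ i.succ_pos
  calc #s * (i + 1) ≤ #s * (Fintype.card α - i) := Nat.mul_le_mul_left _ (by omega)
    _ ≤ #t * (i + 1) := card_mul_le_card_mul _ hup hdown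

end Finset

section Domination

variable {V : Type*} (G : SimpleGraph V)

theorem dominates_monotone : Monotone (Dominates G) := by
  intro A B hAB hA v
  rcases hA v with hv | ⟨u, hu, huv⟩
  · exact Or.inl (hAB hv)
  · exact Or.inr ⟨u, hAB hu, huv⟩

variable [Fintype V]

section Count

variable [DecidablePred (Dominates G)]

theorem domCount_eq_card_filter (i : ℕ) :
    domCount G i = #{U ∈ powersetCard i univ | Dominates G U} := by
  rw [domCount, Nat.card_eq_fintype_card, Fintype.card_subtype]
  congr 1
  ext U
  simp

theorem domCount_add_card_not_dominates (i : ℕ) :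
    domCount G i + #{U ∈ powersetCard i univ | ¬Dominates G U} = (Fintype.card V).choose i := by
  rw [domCount_eq_card_filter, card_filter_add_card_filter_not, card_powersetCard,
    card_univ]

theorem domCount_le_domCount_succ [DecidableEq V] {i : ℕ} (hi : 2 * i + 1 ≤ Fintype.card V) :
    domCount G i ≤ domCount G (i + 1) := by
  simpa only [domCount_eq_card_filter] using
    card_filter_powersetCard_le_succ (dominates_monotone G) hi

end Count

section Neighborhood

variable [DecidableEq V] [DecidableRel G.Adj]

theorem exists_subset_compl_of_not_dominates {U : Finset V} (h : ¬Dominates G U) :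
    ∃ v, U ⊆ (insert v (G.neighborFinset v))ᶜ := by
  simp only [Dominates, not_forall, not_or, not_exists, not_and] at h
  obtain ⟨v, hvU, hadj⟩ := h
  refine ⟨v, fun u hu => ?_⟩
  simp only [mem_compl, mem_insert, SimpleGraph.mem_neighborFinset, not_or]
  exact ⟨fun huv => hvU (huv ▸ hu), fun hvu => hadj u hu hvu.symm⟩

theorem card_compl_insert_neighborFinset (v : V) :
    #(insert v (G.neighborFinset v))ᶜ = Fintype.card V - (G.degree v + 1) := by
  rw [card_compl, card_insert_of_notMem (by simp), SimpleGraph.card_neighborFinset_eq_degree]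

theorem dominates_of_card_lt {δ : ℕ} (hδ : ∀ v, δ ≤ G.degree v) {U : Finset V}
    (hU : Fintype.card V < #U + δ + 1) : Dominates G U := by
  by_contra h
  obtain ⟨v, hv⟩ := exists_subset_compl_of_not_dominates G h
  have := card_le_card hv
  rw [card_compl_insert_neighborFinset] at this
  have := hδ v
  have := G.degree_lt_card_verts v
  omega

end Neighborhood

variable [DecidableEq V] [DecidableRel G.Adj] [DecidablePred (Dominates G)]

theorem domCount_eq_choose {δ : ℕ} (hδ : ∀ v, δ ≤ G.degree v) {i : ℕ}
    (hi : Fintype.card V < i + δ + 1) : domCount G i = (Fintype.card V).choose i := by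
  rw [← domCount_add_card_not_dominates G i, left_eq_add, card_eq_zero, filter_eq_empty_iff]
  intro U hU
  rw [mem_powersetCard] at hU
  exact not_not_intro (dominates_of_card_lt G hδ (hU.2 ▸ hi))

/-- Each non-dominating `k`-set is the complement of a closed neighbourhood. -/
theorem card_not_dominates_le {δ : ℕ} (hδ : ∀ v, δ ≤ G.degree v) {k : ℕ}
    (hk : Fintype.card V ≤ k + δ + 1) :
    #{U ∈ powersetCard k univ | ¬Dominates G U} ≤ Fintype.card V := by
  refine (card_le_card fun U hU => ?_).trans
    (card_image_le (s := univ) (f := fun v => (insert v (G.neighborFinset v))ᶜ))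
  rw [mem_filter, mem_powersetCard] at hU
  obtain ⟨⟨-, hUcard⟩, hU⟩ := hU
  obtain ⟨v, hv⟩ := exists_subset_compl_of_not_dominates G hU
  refine mem_image.mpr ⟨v, mem_univ v, (eq_of_subset_of_card_le hv ?_).symm⟩
  rw [card_compl_insert_neighborFinset, hUcard]
  have := hδ v
  omega

end Domination

theorem regular_unimodal_general {V : Type*} [Fintype V] (G : SimpleGraph V) [DecidableRel G.Adj]
    (m n : ℕ) (hcard : Fintype.card V = 2 * n) (hreg : ∀ v, G.degree v = m)
    (hn : 3 ≤ n - 1) (hnm : n - 1 ≤ m) :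
    UnimodalWithMode (domCount G) n := by
  classical
  have hδ : ∀ v, m ≤ G.degree v := fun v => (hreg v).ge
  refine ⟨fun i hi => domCount_le_domCount_succ G (by omega), fun i hi => ?_⟩
  rw [domCount_eq_choose G hδ (by omega), hcard]
  rcases hi.eq_or_lt with heq | hi
  · subst heq
    have hsplit := domCount_add_card_not_dominates G n
    have hbad := card_not_dominates_le G hδ (k := n) (by omega)
    have hbinom := Nat.choose_two_mul_succ_add_le (by omega : 4 ≤ n)
    rw [hcard] at hsplit hbad
    omega
  · rw [domCount_eq_choose G hδ (by omega), hcard]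
    exact Nat.choose_succ_le_choose (by omega)

theorem regular_unimodal {V : Type*} [Fintype V] (G : SimpleGraph V) [DecidableRel G.Adj]
    (m n : ℕ) (hcard : Fintype.card V = 2 * n) (hreg : ∀ v, G.degree v = m)
    (hn : 3 ≤ n - 1) (hnm : n - 1 ≤ m) (hm : m < 2 * n) :
    UnimodalWithMode (domCount G) n :=
  regular_unimodal_general G m n hcard hreg hn hnm
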